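/- arXiv:1211.4381 — 3 statements merged into one kernel-verified Lean document; each statement's English description precedes it below -/
import Mathlib

section
/- For α₁ = α₂ = α ∈ [0,1], the DoF region D(α,α) contains the symmetric point ((2+α)/3, (2+α)/3) and this point maximizes d₁ + d₂ over D(α,α). -/
def DoF (a1 a2 : ℝ) : Set (ℝ × ℝ) :=
  {d | d.1 ≤ 1 ∧ d.2 ≤ 1 ∧ d.1 + 2*d.2 ≤ 2 + a2 ∧ 2*d.1 + d.2 ≤ 2 + a1}

theorem DoF.fst_add_snd_le {a1 a2 : ℝ} {d : ℝ × ℝ} (hd : d ∈ DoF a1 a2) :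
    d.1 + d.2 ≤ (4 + a1 + a2) / 3 := by
  obtain ⟨-, -, h12, h21⟩ := hd
  linarith

theorem DoF.symm_point_mem {a : ℝ} (h1 : a ≤ 1) : ((2 + a)/3, (2 + a)/3) ∈ DoF a a :=
  ⟨by linarith, by linarith, by linarith, by linarith⟩

theorem stmt9_general (a : ℝ) (h1 : a ≤ 1) :
    ((2 + a)/3, (2 + a)/3) ∈ DoF a a ∧
    ∀ d ∈ DoF a a, d.1 + d.2 ≤ (2 + a)/3 + (2 + a)/3 := by
  refine ⟨DoF.symm_point_mem h1, fun d hd => ?_⟩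
  linarith [DoF.fst_add_snd_le hd]

theorem stmt9 (a : ℝ) (h0 : 0 ≤ a) (h1 : a ≤ 1) :
    ((2 + a)/3, (2 + a)/3) ∈ DoF a a ∧
    ∀ d ∈ DoF a a, d.1 + d.2 ≤ (2 + a)/3 + (2 + a)/3 :=
  stmt9_general a h1
end

section
/- For 0 ≤ α₁ ≤ α₂ ≤ 1 with 2α₂ − α₁ ≤ 1, the nonnegative part of D(α₁,α₂) is the convex hull of the points (0,0), (1,0), (0,1), (1,α₁), (α₂,1), and ((2+2α₁−α₂)/3, (2+2α₂−α₁)/3). -/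
theorem Convex.smul_add_smul_mem_of_zero_mem {𝕜 E : Type*} [Field 𝕜] [LinearOrder 𝕜]
    [IsStrictOrderedRing 𝕜] [AddCommGroup E] [Module 𝕜 E] {s : Set E} (hs : Convex 𝕜 s)
    (h0 : (0 : E) ∈ s) {u v : E} (hu : u ∈ s) (hv : v ∈ s) {a b : 𝕜}
    (ha : 0 ≤ a) (hb : 0 ≤ b) (hab : a + b ≤ 1) : a • u + b • v ∈ s := by
  rcases (add_nonneg ha hb).eq_or_lt with hzero | hpos
  · obtain ⟨rfl, rfl⟩ : a = 0 ∧ b = 0 := ⟨by linarith, by linarith⟩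
    simpa using h0
  · have hw : (a / (a + b)) • u + (b / (a + b)) • v ∈ s :=
      hs hu hv (div_nonneg ha hpos.le) (div_nonneg hb hpos.le) (by field_simp)
    have := hs.smul_mem_of_zero_mem h0 hw ⟨hpos.le, hab⟩
    rwa [smul_add, smul_smul, smul_smul, mul_div_cancel₀ _ hpos.ne',
      mul_div_cancel₀ _ hpos.ne'] at this

def cross (u v : ℝ × ℝ) : ℝ := u.1 * v.2 - u.2 * v.1

theorem cross_smul_add_cross_smul (u v p : ℝ × ℝ) :
    cross p v • u + cross u p • v = cross u v • p := by
  ext <;> simp only [cross, Prod.fst_add, Prod.snd_add, Prod.smul_fst, Prod.smul_snd,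
    smul_eq_mul] <;> ring

theorem mem_convexHull_of_cross_nonneg {s : Set (ℝ × ℝ)} {u v p : ℝ × ℝ} (h0 : 0 ∈ s)
    (hu : u ∈ s) (hv : v ∈ s) (huv : 0 < cross u v) (hup : 0 ≤ cross u p)
    (hpv : 0 ≤ cross p v) (hedge : cross u p + cross p v ≤ cross u v) :
    p ∈ convexHull ℝ s := by
  have hp : p = (cross p v / cross u v) • u + (cross u p / cross u v) • v := by
    rw [div_eq_inv_mul, div_eq_inv_mul, mul_smul, mul_smul, ← smul_add,
      cross_smul_add_cross_smul, inv_smul_smul₀ huv.ne']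
  rw [hp]
  refine (convex_convexHull ℝ s).smul_add_smul_mem_of_zero_mem (subset_convexHull ℝ s h0)
    (subset_convexHull ℝ s hu) (subset_convexHull ℝ s hv) (by positivity) (by positivity) ?_
  rw [← add_div, div_le_one huv]
  linarith

theorem convex_DoF (a1 a2 : ℝ) : Convex ℝ (DoF a1 a2) := by
  have h12 : IsLinearMap ℝ (fun d : ℝ × ℝ => d.1 + 2 * d.2) :=
    ⟨fun d e => by simp only [Prod.fst_add, Prod.snd_add]; ring,
     fun c d => by simp only [Prod.smul_fst, Prod.smul_snd, smul_eq_mul]; ring⟩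
  have h21 : IsLinearMap ℝ (fun d : ℝ × ℝ => 2 * d.1 + d.2) :=
    ⟨fun d e => by simp only [Prod.fst_add, Prod.snd_add]; ring,
     fun c d => by simp only [Prod.smul_fst, Prod.smul_snd, smul_eq_mul]; ring⟩
  exact (convex_halfSpace_le (LinearMap.fst ℝ ℝ ℝ).isLinear 1).inter
    ((convex_halfSpace_le (LinearMap.snd ℝ ℝ ℝ).isLinear 1).inter
      ((convex_halfSpace_le h12 _).inter (convex_halfSpace_le h21 _)))

/-- The last point is the corner `R` where the lines `x + 2y = 2 + a2` and `2x + y = 2 + a1`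
meet. -/
def dofVertices (a1 a2 : ℝ) : Set (ℝ × ℝ) :=
  {((0:ℝ),(0:ℝ)), (1,0), (0,1), (1,a1), (a2,1), ((2 + 2*a1 - a2)/3, (2 + 2*a2 - a1)/3)}

section

variable {a1 a2 : ℝ} (h0 : 0 ≤ a1) (h12 : a1 ≤ a2) (h2 : a2 ≤ 1) (hc : 2*a2 - a1 ≤ 1)
include h0 h12 h2 hc

theorem dofVertices_subset_nonneg_DoF :
    dofVertices a1 a2 ⊆ {d : ℝ × ℝ | d ∈ DoF a1 a2 ∧ 0 ≤ d.1 ∧ 0 ≤ d.2} := by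
  simp only [dofVertices, Set.insert_subset_iff, Set.singleton_subset_iff, Set.mem_ofPred_eq,
    DoF]
  refine ⟨?_, ?_, ?_, ?_, ?_, ?_⟩ <;> refine ⟨⟨?_, ?_, ?_, ?_⟩, ?_, ?_⟩ <;> linarith

theorem mem_convexHull_dofVertices_of_between {x y : ℝ} (hx : 0 ≤ x) (hy : 0 ≤ y)
    (hQR : x + 2 * y ≤ 2 + a2) (hPR : 2 * x + y ≤ 2 + a1)
    (hP : 0 < a1 → a1 * x < y) (hQ : 0 < a2 → a2 * y < x) :
    (x, y) ∈ convexHull ℝ (dofVertices a1 a2) := by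
  have hPp : a1 * x ≤ y := by
    rcases h0.eq_or_lt with h | h
    · rw [← h]; simpa using hy
    · exact (hP h).le
  have hpQ : a2 * y ≤ x := by
    rcases (h0.trans h12).eq_or_lt with h | h
    · rw [← h]; simpa using hx
    · exact (hQ h).le
  rcases le_or_gt 0 (cross (x, y) ((2 + 2*a1 - a2)/3, (2 + 2*a2 - a1)/3)) with hR | hR
  · have hdet : 0 < 1 + a2 - 2*a1 := by
      by_contra! h
      obtain ⟨rfl, rfl⟩ : a1 = 1 ∧ a2 = 1 := ⟨by linarith, by linarith⟩
      linarith [hP one_pos, hQ one_pos]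
    refine mem_convexHull_of_cross_nonneg (u := (1, a1))
      (v := ((2 + 2*a1 - a2)/3, (2 + 2*a2 - a1)/3)) (by simp [dofVertices, Prod.zero_eq_mk])
      (by simp [dofVertices]) (by simp [dofVertices]) ?_ ?_ hR ?_ <;>
      simp only [cross] at hR ⊢
    · nlinarith [mul_pos hdet (by linarith : (0:ℝ) < 2 + a1)]
    · linarith
    · nlinarith [mul_nonneg hdet.le (by linarith : (0:ℝ) ≤ 2 + a1 - 2*x - y)]
  · have hdet : 0 < 1 + a1 - 2*a2 := by
      by_contra! h
      obtain rfl : a1 = 2*a2 - 1 := by linarith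
      simp only [cross] at hR
      nlinarith
    refine mem_convexHull_of_cross_nonneg (u := ((2 + 2*a1 - a2)/3, (2 + 2*a2 - a1)/3))
      (v := (a2, 1)) (by simp [dofVertices, Prod.zero_eq_mk])
      (by simp [dofVertices]) (by simp [dofVertices]) ?_ ?_ ?_ ?_ <;>
      simp only [cross] at hR ⊢
    · nlinarith [mul_pos hdet (by linarith : (0:ℝ) < 2 + a2)]
    · linarith
    · linarith
    · nlinarith [mul_nonneg hdet.le (by linarith : (0:ℝ) ≤ 2 + a2 - x - 2*y)]

theorem nonneg_DoF_subset_convexHull_dofVertices :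
    {d : ℝ × ℝ | d ∈ DoF a1 a2 ∧ 0 ≤ d.1 ∧ 0 ≤ d.2} ⊆ convexHull ℝ (dofVertices a1 a2) := by
  rintro ⟨x, y⟩ ⟨⟨hx1, hy1, hQR, hPR⟩, hx, hy⟩
  dsimp only at hx1 hy1 hQR hPR hx hy
  by_cases hAP : 0 < a1 ∧ y ≤ a1 * x
  · refine mem_convexHull_of_cross_nonneg (u := (1, 0)) (v := (1, a1))
      (by simp [dofVertices, Prod.zero_eq_mk]) (by simp [dofVertices]) (by simp [dofVertices])
      ?_ ?_ ?_ ?_ <;> simp only [cross] <;> nlinarith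
  by_cases hQB : 0 < a2 ∧ x ≤ a2 * y
  · refine mem_convexHull_of_cross_nonneg (u := (a2, 1)) (v := (0, 1))
      (by simp [dofVertices, Prod.zero_eq_mk]) (by simp [dofVertices]) (by simp [dofVertices])
      ?_ ?_ ?_ ?_ <;> simp only [cross] <;> nlinarith
  push Not at hAP hQB
  exact mem_convexHull_dofVertices_of_between h0 h12 h2 hc hx hy hQR hPR hAP hQB

end

theorem stmt14 (a1 a2 : ℝ) (h0 : 0 ≤ a1) (h12 : a1 ≤ a2) (h2 : a2 ≤ 1)
    (hc : 2*a2 - a1 ≤ 1) :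
    {d : ℝ × ℝ | d ∈ DoF a1 a2 ∧ 0 ≤ d.1 ∧ 0 ≤ d.2} =
      convexHull ℝ {((0:ℝ),(0:ℝ)), (1,0), (0,1), (1,a1), (a2,1),
        ((2 + 2*a1 - a2)/3, (2 + 2*a2 - a1)/3)} :=
  (nonneg_DoF_subset_convexHull_dofVertices h0 h12 h2 hc).antisymm <|
    convexHull_min (dofVertices_subset_nonneg_DoF h0 h12 h2 hc)
      ((convex_DoF a1 a2).inter (convex_Ici 0))
end

section
/- For 0 ≤ α₁ ≤ α₂ ≤ 1 with 2α₂ − α₁ ≤ 1, the point ((2+2α₁−α₂)/3, (2+2α₂−α₁)/3) dominates the suboptimal point ((2+α₁−α₂)/(3−α₂), 2/(3−α₂)) in sum DoF, i.e., (4+α₁+α₂)/3 ≥ (4+α₁−α₂)/(3−α₂), and strict inequality holds when 0 < α₂ and 2α₂ − α₁ < 1. -/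
theorem stmt19 (a1 a2 : ℝ) (h0 : 0 ≤ a1) (h12 : a1 ≤ a2) (h2 : a2 ≤ 1)
    (hc : 2*a2 - a1 ≤ 1) :
    (4 + a1 - a2)/(3 - a2) ≤ (4 + a1 + a2)/3 ∧
    (0 < a2 → 2*a2 - a1 < 1 → (4 + a1 - a2)/(3 - a2) < (4 + a1 + a2)/3) := by
  have hpos : (0:ℝ) < 3 - a2 := by linarith
  constructor
  · rw [div_le_div_iff₀ hpos (by norm_num)]
    nlinarith [mul_nonneg (le_trans h0 h12) (by linarith : (0:ℝ) ≤ 2 - a1 - a2)]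
  · intro ha hs
    rw [div_lt_div_iff₀ hpos (by norm_num)]
    nlinarith [mul_pos ha (by linarith : (0:ℝ) < 2 - a1 - a2)]
end
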